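/- Let 0<p0,p≤∞ and 0<q≤∞. For each μ ∈ ℕ0, the norm of the identity between the building blocks satisfies ‖id_μ : (s^{t,Ω}_{p0,q}b)_μ → (s^{t,Ω}_{p,q}b)_μ‖ ≍ 2^{μ(1/p0 − 1/p)_+}, with equivalence constants independent of μ. -/

import Mathlib

open scoped ENNReal

/-- The wavelet index set `A_ν^Ω` of indices `m ∈ ℤ^d` whose wavelet meets the unit
cube: concretely `{m : -1 ≤ m_i ≤ 2^{ν_i}}`, of cardinality `≍ 2^{|ν|₁}`. -/
noncomputable def AOmega (d : ℕ) (ν : Fin d → ℕ) : Finset (Fin d → ℤ) :=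
  Finset.Icc (fun _ => (-1 : ℤ)) (fun i => (2 : ℤ) ^ (ν i))

/-- The quasi-norm of the block `(s^{t,Ω}_{p,q}b)_μ` (finite exponents). -/
noncomputable def bBlockNorm (d : ℕ) (t p q : ℝ) (μ : ℕ)
    (lam : (Fin d → ℕ) → (Fin d → ℤ) → ℂ) : ℝ≥0∞ :=
  (∑' ν : {ν : Fin d → ℕ // ∑ i, ν i = μ},
    ENNReal.ofReal ((2 : ℝ) ^ ((μ : ℝ) * (t - 1 / p) * q)) *
      (∑ m ∈ AOmega d ν.1, ENNReal.ofReal (‖lam ν.1 m‖ ^ p)) ^ (q / p)) ^ (1 / q)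

/-- The operator quasi-norm of the identity
`id_μ : (s^{t,Ω}_{p₀,q}b)_μ → (s^{t,Ω}_{p,q}b)_μ`. -/
noncomputable def blockIdNorm (d : ℕ) (t p₀ p q : ℝ) (μ : ℕ) : ℝ≥0∞ :=
  sInf {C : ℝ≥0∞ | ∀ lam, bBlockNorm d t p q μ lam ≤ C * bBlockNorm d t p₀ q μ lam}

/-!
On a block `ν` with `|ν|₁ = μ`, the weights contribute the factor `2^{μ(1/p₀ - 1/p)}` and the
rest is the comparison of the `ℓ^p` and `ℓ^{p₀}` quasi-norms on `A_ν^Ω`, a set with between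
`2^μ` and `3^d 2^μ` elements. For `p₀ ≤ p` the embedding `ℓ^{p₀} ⊆ ℓ^p` has norm `1`, and a
unit vector shows that `2^{μ(1/p₀ - 1/p)}` is attained. For `p < p₀`, Hölder's inequality costs
`|A_ν^Ω|^{1/p - 1/p₀} ≤ (3^d 2^μ)^{1/p - 1/p₀}`, which the weights cancel up to `3^{d(1/p - 1/p₀)}`,
while the constant vector on one full block shows that the norm is at least `1`.
-/

namespace ENNReal

theorem sum_rpow_le_rpow_sum {ι : Type*} (s : Finset ι) (f : ι → ℝ≥0∞) {r : ℝ} (hr : 1 ≤ r) :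
    ∑ i ∈ s, f i ^ r ≤ (∑ i ∈ s, f i) ^ r := by
  classical
  induction s using Finset.induction_on with
  | empty => simp [zero_rpow_of_pos (zero_lt_one.trans_le hr)]
  | insert i s hi ih =>
    rw [Finset.sum_insert hi, Finset.sum_insert hi]
    exact (add_le_add_right ih _).trans (add_rpow_le_rpow_add _ _ hr)

theorem tsum_rpow_rpow_le_mul {α : Type*} {f g : α → ℝ≥0∞} {q : ℝ} (hq : 0 < q) (K : ℝ≥0∞)
    (h : ∀ i, f i ≤ K * g i) :
    (∑' i, f i ^ q) ^ (1 / q) ≤ K * (∑' i, g i ^ q) ^ (1 / q) := by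
  calc (∑' i, f i ^ q) ^ (1 / q) ≤ (∑' i, (K * g i) ^ q) ^ (1 / q) := by gcongr with i; exact h i
    _ = K * (∑' i, g i ^ q) ^ (1 / q) := by
      simp_rw [mul_rpow_of_nonneg _ _ hq.le, ENNReal.tsum_mul_left,
        mul_rpow_of_nonneg _ _ (one_div_pos.2 hq).le, ← rpow_mul, mul_one_div_cancel hq.ne',
        rpow_one]

theorem ofReal_ofNat_rpow (n : ℕ) [n.AtLeastTwo] (x : ℝ) :
    ENNReal.ofReal ((ofNat(n) : ℝ) ^ x) = (ofNat(n) : ℝ≥0∞) ^ x := by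
  rw [← ofReal_rpow_of_pos Nat.ofNat_pos, ofReal_ofNat]

end ENNReal

noncomputable def finsetLpNorm {ι : Type*} (s : Finset ι) (r : ℝ) (a : ι → ℝ≥0∞) : ℝ≥0∞ :=
  (∑ i ∈ s, a i ^ r) ^ (1 / r)

section finsetLpNorm

variable {ι : Type*} (s : Finset ι) (a : ι → ℝ≥0∞) {p₀ p : ℝ}

theorem finsetLpNorm_le_of_le (hp₀ : 0 < p₀) (h : p₀ ≤ p) :
    finsetLpNorm s p a ≤ finsetLpNorm s p₀ a := by
  have hp : 0 < p := hp₀.trans_le h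
  calc finsetLpNorm s p a = (∑ i ∈ s, (a i ^ p₀) ^ (p / p₀)) ^ (1 / p) := by
        simp_rw [finsetLpNorm, ← ENNReal.rpow_mul, mul_div_cancel₀ _ hp₀.ne']
    _ ≤ ((∑ i ∈ s, a i ^ p₀) ^ (p / p₀)) ^ (1 / p) := by
        gcongr
        exact ENNReal.sum_rpow_le_rpow_sum _ _ ((one_le_div hp₀).2 h)
    _ = finsetLpNorm s p₀ a := by
        rw [finsetLpNorm, ← ENNReal.rpow_mul]
        congr 1
        field_simp

theorem finsetLpNorm_le_card_rpow_mul (hp : 0 < p) (h : p ≤ p₀) :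
    finsetLpNorm s p a ≤ (s.card : ℝ≥0∞) ^ (1 / p - 1 / p₀) * finsetLpNorm s p₀ a := by
  have hp₀ : 0 < p₀ := hp.trans_le h
  have holder := ENNReal.rpow_sum_le_const_mul_sum_rpow (s := s) (f := fun i => a i ^ p)
    ((one_le_div hp).2 h)
  simp_rw [← ENNReal.rpow_mul, mul_div_cancel₀ _ hp.ne'] at holder
  calc finsetLpNorm s p a = ((∑ i ∈ s, a i ^ p) ^ (p₀ / p)) ^ (1 / p₀) := by
        rw [finsetLpNorm, ← ENNReal.rpow_mul]
        congr 1
        field_simp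
    _ ≤ ((s.card : ℝ≥0∞) ^ (p₀ / p - 1) * ∑ i ∈ s, a i ^ p₀) ^ (1 / p₀) := by gcongr
    _ = (s.card : ℝ≥0∞) ^ (1 / p - 1 / p₀) * finsetLpNorm s p₀ a := by
        rw [ENNReal.mul_rpow_of_nonneg _ _ (by positivity), ← ENNReal.rpow_mul, finsetLpNorm]
        congr 2
        field_simp

end finsetLpNorm

theorem finsetLpNorm_indicator_one {ι : Type*} [DecidableEq ι] {s S : Finset ι} (hS : S ⊆ s)
    {r : ℝ} (hr : 0 < r) :
    finsetLpNorm s r (fun i => if i ∈ S then 1 else 0) = (S.card : ℝ≥0∞) ^ (1 / r) := by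
  rw [finsetLpNorm]
  congr 1
  simp_rw [apply_ite (· ^ r), ENNReal.one_rpow, ENNReal.zero_rpow_of_pos hr]
  rw [Finset.sum_ite_mem, Finset.inter_eq_right.2 hS, Finset.sum_const, nsmul_one]

theorem card_AOmega (d : ℕ) (ν : Fin d → ℕ) :
    (AOmega d ν).card = ∏ i, (2 ^ ν i + 2) := by
  rw [AOmega, Pi.card_Icc]
  refine Finset.prod_congr rfl fun i _ => ?_
  rw [Int.card_Icc]
  have h : (2:ℤ) ^ ν i + 1 - (-1) = ((2 ^ ν i + 2 : ℕ) : ℤ) := by push_cast; ring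
  rw [h, Int.toNat_natCast]

theorem two_pow_le_card_AOmega (d : ℕ) (ν : Fin d → ℕ) :
    2 ^ (∑ i, ν i) ≤ (AOmega d ν).card := by
  rw [card_AOmega, ← Finset.prod_pow_eq_pow_sum]
  exact Finset.prod_le_prod' fun i _ => Nat.le_add_right _ 2

theorem card_AOmega_le (d : ℕ) (ν : Fin d → ℕ) :
    (AOmega d ν).card ≤ 3 ^ d * 2 ^ (∑ i, ν i) := by
  rw [card_AOmega]
  calc ∏ i, (2 ^ ν i + 2) ≤ ∏ i : Fin d, 3 * 2 ^ ν i := by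
        refine Finset.prod_le_prod' fun i _ => ?_
        have h1 : 1 ≤ 2 ^ ν i := Nat.one_le_two_pow
        omega
    _ = 3 ^ d * 2 ^ (∑ i, ν i) := by
        rw [Finset.prod_mul_distrib, Finset.prod_const, Finset.prod_pow_eq_pow_sum,
          Finset.card_univ, Fintype.card_fin]

section blockNorm

variable {d : ℕ} {t p₀ p q : ℝ} {μ : ℕ} {lam : (Fin d → ℕ) → (Fin d → ℤ) → ℂ}

theorem bBlockNorm_eq (hp : 0 ≤ p) (hq : 0 ≤ q) :
    bBlockNorm d t p q μ lam = (∑' ν : {ν : Fin d → ℕ // ∑ i, ν i = μ},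
      ((2 : ℝ≥0∞) ^ ((μ : ℝ) * (t - 1 / p)) *
        finsetLpNorm (AOmega d ν.1) p (fun m => ‖lam ν.1 m‖ₑ)) ^ q) ^ (1 / q) := by
  simp_rw [bBlockNorm, finsetLpNorm, ENNReal.mul_rpow_of_nonneg _ _ hq, ← ENNReal.rpow_mul,
    one_div_mul_eq_div, ENNReal.ofReal_ofNat_rpow,
    ← ENNReal.ofReal_rpow_of_nonneg (norm_nonneg _) hp, ofReal_norm]

theorem bBlockNorm_le_mul (hp₀ : 0 < p₀) (hp : 0 < p) (hq : 0 < q) (K : ℝ≥0∞)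
    (h : ∀ ν : Fin d → ℕ, ∑ i, ν i = μ → finsetLpNorm (AOmega d ν) p (fun m => ‖lam ν m‖ₑ) ≤
      K * finsetLpNorm (AOmega d ν) p₀ (fun m => ‖lam ν m‖ₑ)) :
    bBlockNorm d t p q μ lam ≤
      (2 : ℝ≥0∞) ^ ((μ : ℝ) * (1 / p₀ - 1 / p)) * K * bBlockNorm d t p₀ q μ lam := by
  rw [bBlockNorm_eq hp.le hq.le, bBlockNorm_eq hp₀.le hq.le]
  refine ENNReal.tsum_rpow_rpow_le_mul hq _ fun ν => ?_
  have hweight : (2 : ℝ≥0∞) ^ ((μ : ℝ) * (t - 1 / p)) =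
      2 ^ ((μ : ℝ) * (1 / p₀ - 1 / p)) * 2 ^ ((μ : ℝ) * (t - 1 / p₀)) := by
    rw [← ENNReal.rpow_add _ _ two_ne_zero ENNReal.ofNat_ne_top]
    ring_nf
  calc (2 : ℝ≥0∞) ^ ((μ : ℝ) * (t - 1 / p)) * finsetLpNorm (AOmega d ν.1) p _
      ≤ 2 ^ ((μ : ℝ) * (1 / p₀ - 1 / p)) * 2 ^ ((μ : ℝ) * (t - 1 / p₀)) *
          (K * finsetLpNorm (AOmega d ν.1) p₀ (fun m => ‖lam ν.1 m‖ₑ)) := by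
        rw [hweight]; gcongr; exact h ν.1 ν.2
    _ = _ := by ring

theorem bBlockNorm_eq_single (hp : 0 < p) (hq : 0 < q) {ν₀ : Fin d → ℕ}
    (hν₀ : ∑ i, ν₀ i = μ) (hlam : ∀ ν, ν ≠ ν₀ → lam ν = 0) :
    bBlockNorm d t p q μ lam =
      (2 : ℝ≥0∞) ^ ((μ : ℝ) * (t - 1 / p)) *
        finsetLpNorm (AOmega d ν₀) p (fun m => ‖lam ν₀ m‖ₑ) := by
  rw [bBlockNorm_eq hp.le hq.le, tsum_eq_single ⟨ν₀, hν₀⟩, ← ENNReal.rpow_mul,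
    mul_one_div_cancel hq.ne', ENNReal.rpow_one]
  intro ν hν
  have hzero : lam ν.1 = 0 := hlam ν.1 fun h => hν (Subtype.ext h)
  simp only [hzero, Pi.zero_apply, enorm_zero, finsetLpNorm, ENNReal.zero_rpow_of_pos hp,
    Finset.sum_const_zero, ENNReal.zero_rpow_of_pos (one_div_pos.2 hp), mul_zero,
    ENNReal.zero_rpow_of_pos hq]

end blockNorm

section blockIdNorm

variable {d : ℕ} {t p₀ p q : ℝ}

theorem le_blockIdNorm_of_mul_le {μ : ℕ} {c : ℝ≥0∞} (lam : (Fin d → ℕ) → (Fin d → ℤ) → ℂ)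
    (h0 : bBlockNorm d t p₀ q μ lam ≠ 0) (htop : bBlockNorm d t p₀ q μ lam ≠ ∞)
    (h : c * bBlockNorm d t p₀ q μ lam ≤ bBlockNorm d t p q μ lam) :
    c ≤ blockIdNorm d t p₀ p q μ :=
  le_sInf fun _ hC => (ENNReal.mul_le_mul_iff_left h0 htop).1 (h.trans (hC lam))

theorem two_rpow_mul_card_rpow_le_blockIdNorm (hp₀ : 0 < p₀) (hp : 0 < p) (hq : 0 < q)
    {μ : ℕ} {ν₀ : Fin d → ℕ} (hν₀ : ∑ i, ν₀ i = μ) {S : Finset (Fin d → ℤ)} (hS : S ⊆ AOmega d ν₀)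
    (hSne : S.Nonempty) :
    (2 : ℝ≥0∞) ^ ((μ : ℝ) * (1 / p₀ - 1 / p)) * (S.card : ℝ≥0∞) ^ (1 / p - 1 / p₀) ≤
      blockIdNorm d t p₀ p q μ := by
  classical
  set lam : (Fin d → ℕ) → (Fin d → ℤ) → ℂ := fun ν m => if ν = ν₀ ∧ m ∈ S then 1 else 0
  have hcard0 : (S.card : ℝ≥0∞) ≠ 0 := by simpa using hSne.card_ne_zero
  have hnorm : ∀ r, 0 < r →
      bBlockNorm d t r q μ lam = 2 ^ ((μ : ℝ) * (t - 1 / r)) * (S.card : ℝ≥0∞) ^ (1 / r) := by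
    intro r hr
    rw [bBlockNorm_eq_single hr hq hν₀ fun ν hν => by funext m; simp [lam, hν],
      ← finsetLpNorm_indicator_one hS hr]
    congr 2 with m
    by_cases hm : m ∈ S <;> simp [lam, hm]
  refine le_blockIdNorm_of_mul_le lam ?_ ?_ (le_of_eq ?_) <;> rw [hnorm p₀ hp₀]
  · exact mul_ne_zero (by simp) (by simp [ENNReal.rpow_eq_zero_iff, hcard0])
  · exact ENNReal.mul_ne_top (by simp [ENNReal.rpow_eq_top_iff])
      (by simp [ENNReal.rpow_eq_top_iff, hp₀.le])
  · rw [hnorm p hp]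
    calc _ = (2 : ℝ≥0∞) ^ ((μ : ℝ) * (1 / p₀ - 1 / p)) * 2 ^ ((μ : ℝ) * (t - 1 / p₀)) *
          ((S.card : ℝ≥0∞) ^ (1 / p - 1 / p₀) * (S.card : ℝ≥0∞) ^ (1 / p₀)) := by ring
      _ = _ := by
        rw [← ENNReal.rpow_add _ _ two_ne_zero ENNReal.ofNat_ne_top,
          ← ENNReal.rpow_add _ _ hcard0 (ENNReal.natCast_ne_top _)]
        ring_nf


theorem le_blockIdNorm (hd : 1 ≤ d) (hp₀ : 0 < p₀) (hp : 0 < p) (hq : 0 < q) (μ : ℕ) :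
    (2 : ℝ≥0∞) ^ ((μ : ℝ) * max (1 / p₀ - 1 / p) 0) ≤ blockIdNorm d t p₀ p q μ := by
  obtain ⟨ν₀, hν₀⟩ : ∃ ν₀ : Fin d → ℕ, ∑ i, ν₀ i = μ := ⟨Pi.single ⟨0, hd⟩ μ, by simp⟩
  have hcard : 2 ^ μ ≤ (AOmega d ν₀).card := hν₀ ▸ two_pow_le_card_AOmega d ν₀
  have hne : (AOmega d ν₀).Nonempty := Finset.card_pos.1 ((Nat.two_pow_pos μ).trans_le hcard)
  rcases le_total p₀ p with h | h
  · obtain ⟨m₀, hm₀⟩ := hne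
    rw [max_eq_left (sub_nonneg.2 (one_div_le_one_div_of_le hp₀ h))]
    simpa using two_rpow_mul_card_rpow_le_blockIdNorm (t := t) hp₀ hp hq hν₀
      (Finset.singleton_subset_iff.2 hm₀) (Finset.singleton_nonempty m₀)
  · rw [max_eq_right (sub_nonpos.2 (one_div_le_one_div_of_le hp h)), mul_zero, ENNReal.rpow_zero]
    refine le_trans ?_ (two_rpow_mul_card_rpow_le_blockIdNorm hp₀ hp hq hν₀ subset_rfl hne)
    calc (1 : ℝ≥0∞) = 2 ^ ((μ : ℝ) * (1 / p₀ - 1 / p)) * (2 ^ μ : ℝ≥0∞) ^ (1 / p - 1 / p₀) := by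
          rw [← ENNReal.rpow_natCast, ← ENNReal.rpow_mul,
            ← ENNReal.rpow_add _ _ two_ne_zero ENNReal.ofNat_ne_top, ← mul_add,
            sub_add_sub_cancel, sub_self, mul_zero, ENNReal.rpow_zero]
      _ ≤ _ := by
          gcongr
          · exact sub_nonneg.2 (one_div_le_one_div_of_le hp h)
          · exact_mod_cast hcard

theorem blockIdNorm_le (hp₀ : 0 < p₀) (hp : 0 < p) (hq : 0 < q) (μ : ℕ) :
    blockIdNorm d t p₀ p q μ ≤
      (3 : ℝ≥0∞) ^ ((d : ℝ) * max (1 / p - 1 / p₀) 0) *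
        2 ^ ((μ : ℝ) * max (1 / p₀ - 1 / p) 0) := by
  rcases le_total p₀ p with h | h
  · rw [max_eq_right (sub_nonpos.2 (one_div_le_one_div_of_le hp₀ h)),
      max_eq_left (sub_nonneg.2 (one_div_le_one_div_of_le hp₀ h)), mul_zero, ENNReal.rpow_zero,
      one_mul]
    refine sInf_le fun lam => ?_
    simpa using bBlockNorm_le_mul hp₀ hp hq 1 fun ν _ => by
      simpa using finsetLpNorm_le_of_le _ _ hp₀ h
  · have hδ : 0 ≤ 1 / p - 1 / p₀ := sub_nonneg.2 (one_div_le_one_div_of_le hp h)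
    rw [max_eq_left hδ, max_eq_right (sub_nonpos.2 (one_div_le_one_div_of_le hp h)), mul_zero,
      ENNReal.rpow_zero, mul_one]
    refine sInf_le fun lam => (bBlockNorm_le_mul hp₀ hp hq
      ((3 ^ d * 2 ^ μ : ℝ≥0∞) ^ (1 / p - 1 / p₀)) fun ν hν => ?_).trans_eq ?_
    · refine (finsetLpNorm_le_card_rpow_mul _ _ hp h).trans ?_
      gcongr
      exact_mod_cast hν ▸ card_AOmega_le d ν
    · rw [ENNReal.mul_rpow_of_nonneg _ _ hδ, ← ENNReal.rpow_natCast, ← ENNReal.rpow_natCast,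
        ← ENNReal.rpow_mul, ← ENNReal.rpow_mul, mul_left_comm,
        ← ENNReal.rpow_add _ _ two_ne_zero ENNReal.ofNat_ne_top, ← mul_add, sub_add_sub_cancel,
        sub_self, mul_zero, ENNReal.rpow_zero, mul_one]

end blockIdNorm

/-- `‖id_μ : (s^{t,Ω}_{p₀,q}b)_μ → (s^{t,Ω}_{p,q}b)_μ‖ ≍ 2^{μ(1/p₀ - 1/p)₊}`,
with equivalence constants independent of `μ`. -/
theorem blockIdNorm_asymp_p (d : ℕ) (hd : 1 ≤ d) (t p₀ p q : ℝ)
    (hp₀ : 0 < p₀) (hp : 0 < p) (hq : 0 < q) :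
    ∃ c₁ c₂ : ℝ, 0 < c₁ ∧ 0 < c₂ ∧ ∀ μ : ℕ,
      ENNReal.ofReal (c₁ * (2 : ℝ) ^ ((μ : ℝ) * max (1 / p₀ - 1 / p) 0)) ≤
        blockIdNorm d t p₀ p q μ ∧
      blockIdNorm d t p₀ p q μ ≤
        ENNReal.ofReal (c₂ * (2 : ℝ) ^ ((μ : ℝ) * max (1 / p₀ - 1 / p) 0)) := by
  refine ⟨1, 3 ^ ((d : ℝ) * max (1 / p - 1 / p₀) 0), one_pos, by positivity, fun μ => ?_⟩
  rw [one_mul, ENNReal.ofReal_mul (by positivity)]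
  simp only [ENNReal.ofReal_ofNat_rpow]
  exact ⟨le_blockIdNorm hd hp₀ hp hq μ, blockIdNorm_le hp₀ hp hq μ⟩
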